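/- Let (A, ·, 1, r) be a quasitriangular infinitesimal bialgebra of weight λ and M an A-bimodule. Define φ : M → A ⊗ M by φ(m) = −Σᵢ uᵢ ⊗ (vᵢ ▷ m) and ψ : M → M ⊗ A by ψ(m) = Σᵢ (m ◁ uᵢ) ⊗ vᵢ − λ(m ⊗ 1). Then (id_A ⊗ ψ)∘φ = (φ ⊗ id_A)∘ψ, i.e. M is an A-bicomodule. -/

import Mathlib

/-!
`φ` only produces a left tensor factor and `ψ` only a right one, so both sides expand to
`-Σᵢⱼ uᵢ ⊗ ((vᵢ ▷ m) ◁ uⱼ) ⊗ vⱼ + λ Σᵢ uᵢ ⊗ (vᵢ ▷ m) ⊗ 1`, the two double sums being matched by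
`(x ▷ m) ◁ y = x ▷ (m ◁ y)`.
-/

open TensorProduct BigOperators

noncomputable def r12 {k A ι : Type*} [Field k] [Ring A] [Algebra k A] [Fintype ι]
    (u v : ι → A) : (A ⊗[k] A) ⊗[k] A :=
  ∑ i, ((u i) ⊗ₜ[k] (v i)) ⊗ₜ[k] (1 : A)

noncomputable def r13 {k A ι : Type*} [Field k] [Ring A] [Algebra k A] [Fintype ι]
    (u v : ι → A) : (A ⊗[k] A) ⊗[k] A :=
  ∑ i, ((u i) ⊗ₜ[k] (1 : A)) ⊗ₜ[k] (v i)

noncomputable def r23 {k A ι : Type*} [Field k] [Ring A] [Algebra k A] [Fintype ι]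
    (u v : ι → A) : (A ⊗[k] A) ⊗[k] A :=
  ∑ i, ((1 : A) ⊗ₜ[k] (u i)) ⊗ₜ[k] (v i)

noncomputable def psiMap {k A M ι : Type*} [Field k] [Ring A] [Algebra k A]
    [AddCommGroup M] [Module k M] [Fintype ι] (lam : k) (u v : ι → A)
    (rAct : M →ₗ[k] A →ₗ[k] M) : M →ₗ[k] M ⊗[k] A :=
  (∑ i, ((TensorProduct.mk k M A).flip (v i)).comp (rAct.flip (u i)))
    - lam • ((TensorProduct.mk k M A).flip (1 : A))

noncomputable def phiMap {k A M ι : Type*} [Field k] [Ring A] [Algebra k A]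
    [AddCommGroup M] [Module k M] [Fintype ι] (u v : ι → A)
    (lAct : A →ₗ[k] M →ₗ[k] M) : M →ₗ[k] A ⊗[k] M :=
  -(∑ i, (TensorProduct.mk k A M (u i)).comp (lAct (v i)))

section Coactions

variable {k A M ι : Type*} [Field k] [Ring A] [Algebra k A] [AddCommGroup M] [Module k M]
  [Fintype ι] (lam : k) (u v : ι → A) (lAct : A →ₗ[k] M →ₗ[k] M) (rAct : M →ₗ[k] A →ₗ[k] M)

theorem phiMap_apply (m : M) : phiMap u v lAct m = -∑ i, u i ⊗ₜ[k] lAct (v i) m := by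
  simp [phiMap]

theorem psiMap_apply (m : M) :
    psiMap lam u v rAct m = ∑ i, rAct m (u i) ⊗ₜ[k] v i - lam • m ⊗ₜ[k] (1 : A) := by
  simp [psiMap]

theorem lTensor_psiMap_tmul (a : A) (x : M) :
    LinearMap.lTensor A (psiMap lam u v rAct) (a ⊗ₜ[k] x)
      = ∑ j, a ⊗ₜ[k] (rAct x (u j) ⊗ₜ[k] v j) - lam • a ⊗ₜ[k] (x ⊗ₜ[k] (1 : A)) := by
  rw [LinearMap.lTensor_tmul, psiMap_apply, tmul_sub, tmul_sum, tmul_smul]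

theorem assoc_rTensor_phiMap_tmul (x : M) (b : A) :
    TensorProduct.assoc k A M A (LinearMap.rTensor A (phiMap u v lAct) (x ⊗ₜ[k] b))
      = -∑ i, u i ⊗ₜ[k] (lAct (v i) x ⊗ₜ[k] b) := by
  rw [LinearMap.rTensor_tmul, phiMap_apply, neg_tmul, sum_tmul,
    map_neg (TensorProduct.assoc k A M A), map_sum (TensorProduct.assoc k A M A)]
  simp only [TensorProduct.assoc_tmul]

end Coactions

theorem stmt3_general {k A M ι : Type*} [Field k] [Ring A] [Algebra k A]
    [AddCommGroup M] [Module k M] [Fintype ι] (lam : k) (u v : ι → A)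
    (lAct : A →ₗ[k] M →ₗ[k] M) (rAct : M →ₗ[k] A →ₗ[k] M)
    (hlr : ∀ (x : A) (m : M) (y : A), rAct (lAct x m) y = lAct x (rAct m y)) :
    ∀ m : M,
      (LinearMap.lTensor A (psiMap lam u v rAct)) (phiMap u v lAct m)
        = (TensorProduct.assoc k A M A)
            ((LinearMap.rTensor A (phiMap u v lAct)) (psiMap lam u v rAct m)) := by
  intro m
  calc LinearMap.lTensor A (psiMap lam u v rAct) (phiMap u v lAct m)
      = -∑ i, (∑ j, u i ⊗ₜ[k] (lAct (v i) (rAct m (u j)) ⊗ₜ[k] v j)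
          - lam • u i ⊗ₜ[k] (lAct (v i) m ⊗ₜ[k] (1 : A))) := by
        simp only [phiMap_apply, map_neg, map_sum, lTensor_psiMap_tmul, hlr]
    _ = ∑ j, -∑ i, u i ⊗ₜ[k] (lAct (v i) (rAct m (u j)) ⊗ₜ[k] v j)
          - lam • -∑ i, u i ⊗ₜ[k] (lAct (v i) m ⊗ₜ[k] (1 : A)) := by
        rw [Finset.sum_sub_distrib, Finset.sum_comm, ← Finset.smul_sum, Finset.sum_neg_distrib,
          smul_neg]
        abel
    _ = _ := by
        simp only [psiMap_apply, map_sub, map_sum, map_smul, assoc_rTensor_phiMap_tmul]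

/-- For a quasitriangular infinitesimal bialgebra `(A, r)` of weight `λ` and an
`A`-bimodule `M`, the coactions `φ(m) = −Σᵢ uᵢ ⊗ (vᵢ▷m)` and
`ψ(m) = Σᵢ (m◁uᵢ) ⊗ vᵢ − λ(m⊗1)` satisfy `(id_A ⊗ ψ)∘φ = (φ ⊗ id_A)∘ψ`,
i.e. `M` is an `A`-bicomodule. -/
theorem stmt3 {k A M ι : Type*} [Field k] [Ring A] [Algebra k A]
    [AddCommGroup M] [Module k M] [Fintype ι] (lam : k) (u v : ι → A)
    (lAct : A →ₗ[k] M →ₗ[k] M) (rAct : M →ₗ[k] A →ₗ[k] M)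
    (hl : ∀ (x y : A) (m : M), lAct (x * y) m = lAct x (lAct y m))
    (hr : ∀ (m : M) (x y : A), rAct (rAct m x) y = rAct m (x * y))
    (hlr : ∀ (x : A) (m : M) (y : A), rAct (lAct x m) y = lAct x (rAct m y))
    (hWAYB : r13 u v * r12 u v - r12 u v * r23 u v + r23 u v * r13 u v
        - lam • r13 u v = (0 : (A ⊗[k] A) ⊗[k] A)) :
    ∀ m : M,
      (LinearMap.lTensor A (psiMap lam u v rAct)) (phiMap u v lAct m)
        = (TensorProduct.assoc k A M A)
            ((LinearMap.rTensor A (phiMap u v lAct)) (psiMap lam u v rAct m)) :=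
  stmt3_general lam u v lAct rAct hlr
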